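/- Let N ≥ 1, 0 < γ < min{2, N} and p > p_γ := 1 + (2−γ)/N. Then there exists a constant C_* > 0, depending only on N, p and γ, with the following property: if μ is a nonnegative measurable function on ℝ^N and there exists δ > 0 such that μ(x) ≥ C_* |x|^{−(2−γ)/(p−1)} for almost every x ∈ B(0,δ), then for every T > 0 there is no solution of the Hardy parabolic equation ∂_t u − Δu = |x|^{-γ} u^p with initial data μ on ℝ^N × [0,T). -/

import Mathlib

open MeasureTheory Real
open scoped ENNReal NNReal

/-- The Gaussian heat kernel on `ℝ^N`. -/
noncomputable def G (N : ℕ) (x : EuclideanSpace ℝ (Fin N)) (t : ℝ) : ℝ :=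
  (4 * Real.pi * t) ^ (-(N : ℝ) / 2) * Real.exp (-‖x‖ ^ 2 / (4 * t))

/-- The right-hand side of the Duhamel formulation of the Hardy parabolic equation
`∂_t u - Δu = |x|^{-γ} u^p` with a nonnegative measurable function `μ` as initial data. -/
noncomputable def hardyRHSFun (N : ℕ) (p γ : ℝ) (μ : EuclideanSpace ℝ (Fin N) → ℝ)
    (u : EuclideanSpace ℝ (Fin N) → ℝ → ℝ) (x : EuclideanSpace ℝ (Fin N)) (t : ℝ) : ℝ≥0∞ :=
  (∫⁻ y, ENNReal.ofReal (G N (x - y) t * μ y)) +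
    ∫⁻ s in Set.Ioo (0 : ℝ) t,
      ∫⁻ y, ENNReal.ofReal (G N (x - y) (t - s) * ‖y‖ ^ (-γ) * u y s ^ p)

/-- `u` is a solution of the Hardy parabolic equation `∂_t u - Δu = |x|^{-γ} u^p`
with initial data the nonnegative measurable function `μ` on `ℝ^N × [0,T)`. -/
def IsSolutionFun (N : ℕ) (p γ : ℝ) (μ : EuclideanSpace ℝ (Fin N) → ℝ) (T : ℝ)
    (u : EuclideanSpace ℝ (Fin N) → ℝ → ℝ) : Prop :=
  Measurable (Function.uncurry u) ∧ (∀ x t, 0 ≤ u x t) ∧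
    ∀ᵐ x ∂(volume : Measure (EuclideanSpace ℝ (Fin N))), ∀ t : ℝ, 0 < t → t < T →
      hardyRHSFun N p γ μ u x t ≠ ⊤ ∧ ENNReal.ofReal (u x t) = hardyRHSFun N p γ μ u x t


/-!
A solution is bounded below on the parabolic region `‖x‖ ≤ √t` by a self-similar profile
`d * t ^ (a / 2)`, `a = -(2 - γ) / (p - 1)`, because the heat kernel at time `≈ t` is bounded
below by `t ^ (-N / 2)` on a ball of radius `≈ √t`. For the initial term this holds with `d`
proportional to `C_*`. Inserting such a bound into the Duhamel term returns the same profile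
with `d` replaced by `c * d ^ p`, as `a` is the scaling exponent. Once `c * d ^ (p - 1) ≥ 2`,
which a large `C_*` guarantees, the bound doubles forever, so `u` could not be finite on a set of
positive measure.
-/

open Metric

section HardyParabolic

variable {N : ℕ}

lemma const_mul_measure_le_setLIntegral {α : Type*} [MeasurableSpace α] {ν : Measure α}
    {f : α → ℝ≥0∞} {s : Set α} {C : ℝ≥0∞} (hs : MeasurableSet s)
    (h : ∀ᵐ y ∂ν, y ∈ s → C ≤ f y) : C * ν s ≤ ∫⁻ y in s, f y ∂ν :=
  (setLIntegral_const s C).symm.trans_le (setLIntegral_mono_ae' hs h)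

lemma sqrt_div_two_rpow {t : ℝ} (ht : 0 ≤ t) (b : ℝ) :
    (√t / 2) ^ b = 2 ^ (-b) * t ^ (b / 2) := by
  rw [Real.div_rpow (Real.sqrt_nonneg t) zero_le_two, Real.rpow_neg zero_le_two,
    Real.rpow_div_two_eq_sqrt b ht, div_eq_inv_mul]

lemma rpow_neg_div_two_mul_rpow_mul_self {t a p γ : ℝ} (ht : 0 < t)
    (hscale : a * (p - 1) = γ - 2) :
    t ^ (-γ / 2) * (t ^ (a / 2)) ^ p * t = t ^ (a / 2) := by
  rw [← Real.rpow_mul ht.le, ← Real.rpow_add ht, ← Real.rpow_add_one ht.ne']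
  congr 1
  linear_combination hscale / 2

lemma two_mul_le_mul_rpow {c A d p : ℝ} (hc : 0 ≤ c) (hcA : c * A ^ (p - 1) = 2) (hA : 0 < A)
    (hAd : A ≤ d) (hp : 1 ≤ p) : 2 * d ≤ c * d ^ p := by
  have hd : 0 < d := hA.trans_le hAd
  calc 2 * d = c * A ^ (p - 1) * d := by rw [hcA]
    _ ≤ c * d ^ (p - 1) * d := by gcongr
    _ = c * d ^ p := by rw [mul_assoc, ← Real.rpow_add_one hd.ne', sub_add_cancel]

lemma rpow_mul_exp_neg_two_le_G {z : EuclideanSpace ℝ (Fin N)} {s t : ℝ} (ht : 0 < t) (hs₁ : t / 2 ≤ s) (hs₂ : s ≤ t)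
    (hz : ‖z‖ ≤ 2 * √t) :
    (4 * π * t) ^ (-(N : ℝ) / 2) * exp (-2) ≤ G N z s := by
  have hs : 0 < s := by linarith
  have hz2 : ‖z‖ ^ 2 ≤ 4 * t := by
    calc ‖z‖ ^ 2 ≤ (2 * √t) ^ 2 := pow_le_pow_left₀ (norm_nonneg z) hz 2
      _ = 4 * t := by rw [mul_pow, Real.sq_sqrt ht.le]; norm_num
  have hpow : (4 * π * t) ^ (-(N : ℝ) / 2) ≤ (4 * π * s) ^ (-(N : ℝ) / 2) :=
    Real.rpow_le_rpow_of_nonpos (by positivity) (by gcongr)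
      (by have := N.cast_nonneg (α := ℝ); linarith)
  have hexp : exp (-2) ≤ exp (-‖z‖ ^ 2 / (4 * s)) := by
    rw [exp_le_exp, neg_div, neg_le_neg_iff, div_le_iff₀ (by positivity)]
    linarith
  exact mul_le_mul hpow hexp (exp_pos _).le (by positivity)

/-- The lower bound `(4πt) ^ (-N / 2) * exp (-2)` of `G N z s` for `‖z‖ ≤ 2√t`, `t / 2 ≤ s ≤ t`,
times the volume of a ball of radius `√t / 4`: the powers of `t` cancel. -/
noncomputable def heatBallMass (N : ℕ) : ℝ :=
  (4 * π) ^ (-(N : ℝ) / 2) * exp (-2) *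
    (volume (ball (0 : EuclideanSpace ℝ (Fin N)) 1)).toReal / 4 ^ N

lemma heatBallMass_pos (N : ℕ) : 0 < heatBallMass N := by
  have hω := ENNReal.toReal_pos (measure_ball_pos volume (0 : EuclideanSpace ℝ (Fin N)) one_pos).ne'
    measure_ball_lt_top.ne
  unfold heatBallMass
  positivity

-- `hf` skips the origin, where the weights `‖y‖ ^ a`, `a < 0`, take the junk value `0`.
lemma ofReal_heatBallMass_mul_le_lintegral (hN : 1 ≤ N) {x : EuclideanSpace ℝ (Fin N)}
    {s t K : ℝ} {f : EuclideanSpace ℝ (Fin N) → ℝ} (ht : 0 < t) (hs₁ : t / 2 ≤ s) (hs₂ : s ≤ t)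
    (hx : ‖x‖ ≤ √t) (hK : 0 ≤ K) (hf : ∀ᵐ y ∂volume, 0 < ‖y‖ → ‖y‖ < √t / 2 → K ≤ f y) :
    ENNReal.ofReal (heatBallMass N * K) ≤ ∫⁻ y, ENNReal.ofReal (G N (x - y) s * f y) := by
  have : Nonempty (Fin N) := ⟨⟨0, hN⟩⟩
  have hst : 0 < √t := Real.sqrt_pos.2 ht
  obtain ⟨c, hc⟩ := exists_norm_eq (EuclideanSpace ℝ (Fin N)) (c := √t / 4) (by positivity)
  set g := (4 * π * t) ^ (-(N : ℝ) / 2) * exp (-2) with hg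
  have hball : ∀ y ∈ ball c (√t / 4), 0 < ‖y‖ ∧ ‖y‖ < √t / 2 := by
    intro y hy
    rw [mem_ball, dist_eq_norm] at hy
    have h₁ := norm_sub_norm_le c y
    have h₂ := norm_sub_norm_le y c
    rw [norm_sub_rev] at h₁
    constructor <;> linarith
  have hmass : heatBallMass N * K =
      g * K * ((√t / 4) ^ N * (volume (ball (0 : EuclideanSpace ℝ (Fin N)) 1)).toReal) := by
    rw [hg, heatBallMass, Real.mul_rpow (by positivity) ht.le,
      Real.rpow_div_two_eq_sqrt _ ht.le, Real.rpow_neg hst.le, Real.rpow_natCast, div_pow]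
    field_simp
  have hvol : volume (ball c (√t / 4)) = ENNReal.ofReal
      ((√t / 4) ^ N * (volume (ball (0 : EuclideanSpace ℝ (Fin N)) 1)).toReal) := by
    rw [Measure.addHaar_ball volume c (by positivity), finrank_euclideanSpace_fin,
      ENNReal.ofReal_mul (by positivity), ENNReal.ofReal_toReal measure_ball_lt_top.ne]
  calc ENNReal.ofReal (heatBallMass N * K)
      = ENNReal.ofReal (g * K) * volume (ball c (√t / 4)) := by
        rw [hvol, hmass, ENNReal.ofReal_mul (by positivity)]
    _ ≤ ∫⁻ y in ball c (√t / 4), ENNReal.ofReal (G N (x - y) s * f y) := by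
        refine const_mul_measure_le_setLIntegral measurableSet_ball ?_
        filter_upwards [hf] with y hy hyB
        obtain ⟨hy₀, hyt⟩ := hball y hyB
        have hG : g ≤ G N (x - y) s :=
          rpow_mul_exp_neg_two_le_G ht hs₁ hs₂ (by linarith [norm_sub_le x y])
        exact ENNReal.ofReal_le_ofReal
          (mul_le_mul hG (hy hy₀ hyt) hK ((by positivity : 0 ≤ g).trans hG))
    _ ≤ _ := setLIntegral_le_lintegral _ _

def HasSelfSimilarLowerBound (u : EuclideanSpace ℝ (Fin N) → ℝ → ℝ) (τ a d : ℝ) : Prop :=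
  ∀ᵐ x ∂volume, ∀ t, 0 < t → t < τ → ‖x‖ ≤ √t → d * t ^ (a / 2) ≤ u x t

variable {p γ T : ℝ} {μ : EuclideanSpace ℝ (Fin N) → ℝ} {u : EuclideanSpace ℝ (Fin N) → ℝ → ℝ}

lemma IsSolutionFun.le_of_ofReal_le_hardyRHSFun (hu : IsSolutionFun N p γ μ T u) :
    ∀ᵐ x ∂volume, ∀ t, 0 < t → t < T → ∀ r : ℝ,
      ENNReal.ofReal r ≤ hardyRHSFun N p γ μ u x t → r ≤ u x t := by
  obtain ⟨-, hu₀, hu⟩ := hu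
  filter_upwards [hu] with x hx t ht htT r hr
  rw [← (hx t ht htT).2] at hr
  exact (ENNReal.ofReal_le_ofReal_iff (hu₀ x t)).1 hr

lemma hasSelfSimilarLowerBound_of_initialData (hN : 1 ≤ N) {τ δ C a : ℝ}
    (hu : IsSolutionFun N p γ μ T u) (hτT : τ ≤ T) (hτδ : √τ ≤ 2 * δ) (ha : a ≤ 0) (hC : 0 ≤ C)
    (hμ : ∀ᵐ y ∂volume, y ∈ ball (0 : EuclideanSpace ℝ (Fin N)) δ → C * ‖y‖ ^ a ≤ μ y) :
    HasSelfSimilarLowerBound u τ a (heatBallMass N * 2 ^ (-a) * C) := by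
  filter_upwards [hu.le_of_ofReal_le_hardyRHSFun] with x hx t ht htτ hxt
  refine hx t ht (htτ.trans_le hτT) _ (le_trans ?_ le_self_add)
  rw [mul_assoc, mul_assoc]
  refine ofReal_heatBallMass_mul_le_lintegral hN ht (by linarith) le_rfl hxt (by positivity) ?_
  filter_upwards [hμ] with y hy hy₀ hyt
  have hyδ : ‖y‖ < δ := by linarith [Real.sqrt_lt_sqrt ht.le htτ]
  calc 2 ^ (-a) * (C * t ^ (a / 2)) = C * (√t / 2) ^ a := by
        rw [sqrt_div_two_rpow ht.le]; ring
    _ ≤ C * ‖y‖ ^ a := mul_le_mul_of_nonneg_left (Real.rpow_le_rpow_of_nonpos hy₀ hyt.le ha) hC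
    _ ≤ μ y := hy (mem_ball_zero_iff.2 hyδ)

lemma HasSelfSimilarLowerBound.ofReal_le_lintegral_source (hN : 1 ≤ N) {τ a d : ℝ}
    (h : HasSelfSimilarLowerBound u τ a d) (hp : 0 ≤ p) (hγ : 0 ≤ γ) (ha : a ≤ 0) (hd : 0 ≤ d)
    {x : EuclideanSpace ℝ (Fin N)} {s t : ℝ} (ht : 0 < t) (htτ : t < τ) (hxt : ‖x‖ ≤ √t)
    (hs₁ : t / 4 < s) (hs₂ : s < t / 2) :
    ENNReal.ofReal (heatBallMass N * (2 ^ γ * t ^ (-γ / 2) * (d * t ^ (a / 2)) ^ p)) ≤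
      ∫⁻ y, ENNReal.ofReal (G N (x - y) (t - s) * ‖y‖ ^ (-γ) * u y s ^ p) := by
  simp only [mul_assoc (G N _ _)]
  refine ofReal_heatBallMass_mul_le_lintegral hN ht (by linarith) (by linarith) hxt
    (by positivity) ?_
  filter_upwards [h] with y hy hy₀ hyt
  have hys : ‖y‖ ≤ √s :=
    (Real.le_sqrt (norm_nonneg y) (by linarith)).2 (by nlinarith [Real.sq_sqrt ht.le, norm_nonneg y])
  have hus : d * t ^ (a / 2) ≤ u y s :=
    (mul_le_mul_of_nonneg_left (Real.rpow_le_rpow_of_nonpos (x := s) (y := t) (by linarith)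
      (by linarith) (by linarith)) hd).trans (hy s (by linarith) (by linarith) hys)
  calc 2 ^ γ * t ^ (-γ / 2) * (d * t ^ (a / 2)) ^ p
      = (√t / 2) ^ (-γ) * (d * t ^ (a / 2)) ^ p := by rw [sqrt_div_two_rpow ht.le, neg_neg]
    _ ≤ ‖y‖ ^ (-γ) * u y s ^ p :=
        mul_le_mul (Real.rpow_le_rpow_of_nonpos hy₀ hyt.le (by linarith))
          (Real.rpow_le_rpow (by positivity) hus hp) (by positivity) (by positivity)

lemma HasSelfSimilarLowerBound.duhamel (hN : 1 ≤ N) {τ a d : ℝ}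
    (h : HasSelfSimilarLowerBound u τ a d) (hu : IsSolutionFun N p γ μ T u) (hτT : τ ≤ T)
    (hp : 0 ≤ p) (hγ : 0 ≤ γ) (ha : a ≤ 0) (hscale : a * (p - 1) = γ - 2) (hd : 0 ≤ d) :
    HasSelfSimilarLowerBound u τ a (heatBallMass N * 2 ^ γ / 4 * d ^ p) := by
  filter_upwards [hu.le_of_ofReal_le_hardyRHSFun] with x hx t ht htτ hxt
  set K := heatBallMass N * (2 ^ γ * t ^ (-γ / 2) * (d * t ^ (a / 2)) ^ p) with hK
  have hscaling : heatBallMass N * 2 ^ γ / 4 * d ^ p * t ^ (a / 2) = K * (t / 4) := by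
    rw [← rpow_neg_div_two_mul_rpow_mul_self ht hscale, hK, Real.mul_rpow hd (by positivity)]
    ring
  refine hx t ht (htτ.trans_le hτT) _ (le_trans ?_ le_add_self)
  calc ENNReal.ofReal (heatBallMass N * 2 ^ γ / 4 * d ^ p * t ^ (a / 2))
      = ENNReal.ofReal K * volume (Set.Ioo (t / 4) (t / 2)) := by
        rw [hscaling, Real.volume_Ioo, ← ENNReal.ofReal_mul
          (mul_nonneg (heatBallMass_pos N).le (by positivity)), show t / 2 - t / 4 = t / 4 by ring]
    _ ≤ ∫⁻ s in Set.Ioo (t / 4) (t / 2),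
          ∫⁻ y, ENNReal.ofReal (G N (x - y) (t - s) * ‖y‖ ^ (-γ) * u y s ^ p) :=
        const_mul_measure_le_setLIntegral measurableSet_Ioo <| ae_of_all _ fun s hs =>
          h.ofReal_le_lintegral_source hN hp hγ ha hd ht htτ hxt hs.1 hs.2
    _ ≤ _ := lintegral_mono_set (Set.Ioo_subset_Ioo (by linarith) (by linarith))

lemma HasSelfSimilarLowerBound.mono {τ a d d' : ℝ} (h : HasSelfSimilarLowerBound u τ a d)
    (hd : d' ≤ d) : HasSelfSimilarLowerBound u τ a d' := by
  filter_upwards [h] with x hx t ht htτ hxt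
  exact (mul_le_mul_of_nonneg_right hd (by positivity)).trans (hx t ht htτ hxt)

lemma HasSelfSimilarLowerBound.two_pow_mul (hN : 1 ≤ N) {τ a A : ℝ}
    (h : HasSelfSimilarLowerBound u τ a A) (hu : IsSolutionFun N p γ μ T u) (hτT : τ ≤ T)
    (hp : 1 ≤ p) (hγ : 0 ≤ γ) (ha : a ≤ 0) (hscale : a * (p - 1) = γ - 2) (hA : 0 < A)
    (hcA : heatBallMass N * 2 ^ γ / 4 * A ^ (p - 1) = 2) (k : ℕ) :
    HasSelfSimilarLowerBound u τ a (2 ^ k * A) := by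
  induction k with
  | zero => simpa using h
  | succ k ih =>
    have hAk : A ≤ 2 ^ k * A := le_mul_of_one_le_left hA.le (one_le_pow₀ one_le_two)
    rw [pow_succ, mul_comm _ 2, mul_assoc]
    exact (ih.duhamel hN hu hτT (by linarith) hγ ha hscale (hA.le.trans hAk)).mono
      (two_mul_le_mul_rpow (by have := heatBallMass_pos N; positivity) hcA hA hAk hp)

lemma not_forall_hasSelfSimilarLowerBound_two_pow_mul {τ a A : ℝ} (hτ : 0 < τ) (hA : 0 < A) :
    ¬ ∀ k : ℕ, HasSelfSimilarLowerBound u τ a (2 ^ k * A) := by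
  intro h
  have ht : 0 < τ / 2 := by positivity
  obtain ⟨x, hxB, hx⟩ := Measure.exists_mem_of_measure_ne_zero_of_ae
    (measure_ball_pos volume (0 : EuclideanSpace ℝ (Fin N)) (Real.sqrt_pos.2 ht)).ne'
    (ae_restrict_of_ae (ae_all_iff.2 h))
  have hpos : 0 < A * (τ / 2) ^ (a / 2) := by positivity
  obtain ⟨k, hk⟩ := pow_unbounded_of_one_lt (u x (τ / 2) / (A * (τ / 2) ^ (a / 2))) one_lt_two
  rw [div_lt_iff₀ hpos] at hk
  have := hx k (τ / 2) ht (by linarith) (mem_ball_zero_iff.1 hxB).le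
  linarith

end HardyParabolic

theorem statement5_general (N : ℕ) (hN : 1 ≤ N) (p γ : ℝ)
    (hγ0 : 0 < γ) (hγ2 : γ < 2) (hp : 1 + (2 - γ) / N < p) :
    ∃ Cstar : ℝ, 0 < Cstar ∧
      ∀ μ : EuclideanSpace ℝ (Fin N) → ℝ, Measurable μ → (∀ x, 0 ≤ μ x) →
      (∃ δ : ℝ, 0 < δ ∧ ∀ᵐ x ∂(volume : Measure (EuclideanSpace ℝ (Fin N))),
          x ∈ Metric.ball (0 : EuclideanSpace ℝ (Fin N)) δ →
          Cstar * ‖x‖ ^ (-(2 - γ) / (p - 1)) ≤ μ x) →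
      ∀ T : ℝ, 0 < T →
        ¬∃ u : EuclideanSpace ℝ (Fin N) → ℝ → ℝ, IsSolutionFun N p γ μ T u := by
  have hp1 : 1 < p := (le_add_of_nonneg_right (div_nonneg (by linarith) N.cast_nonneg)).trans_lt hp
  set a := -(2 - γ) / (p - 1) with ha_def
  have ha : a ≤ 0 := div_nonpos_of_nonpos_of_nonneg (by linarith) (by linarith)
  have hscale : a * (p - 1) = γ - 2 := by rw [ha_def, div_mul_cancel₀ _ (by linarith)]; ring
  have hM := heatBallMass_pos N
  set c := heatBallMass N * 2 ^ γ / 4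
  have hc : 0 < c := by positivity
  set A := (2 / c) ^ (p - 1)⁻¹
  have hA : 0 < A := by positivity
  have hcA : c * A ^ (p - 1) = 2 := by
    rw [← Real.rpow_mul (by positivity), inv_mul_cancel₀ (by linarith), Real.rpow_one]
    field_simp
  refine ⟨A / (heatBallMass N * 2 ^ (-a)), by positivity, ?_⟩
  rintro μ - - ⟨δ, hδ, hμ⟩ T hT ⟨u, hu⟩
  set τ := min T ((2 * δ) ^ 2)
  have hτδ : √τ ≤ 2 * δ :=
    (Real.sqrt_le_sqrt (min_le_right _ _)).trans_eq (Real.sqrt_sq (by positivity))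
  have hbase : HasSelfSimilarLowerBound u τ a A := by
    have := hasSelfSimilarLowerBound_of_initialData hN hu (min_le_left _ _) hτδ ha
      (by positivity) hμ
    rwa [mul_div_cancel₀ _ (by positivity)] at this
  exact not_forall_hasSelfSimilarLowerBound_two_pow_mul (lt_min hT (by positivity)) hA
    (hbase.two_pow_mul hN hu (min_le_left _ _) hp1.le hγ0.le ha hscale hA hcA)

/-- Remark (i), supercritical case, θ = 2. For `p > p_γ = 1 + (2-γ)/N`
there is `C_* > 0` such that if `μ(x) ≥ C_* |x|^{-(2-γ)/(p-1)}` a.e. in a neighborhood of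
the origin, then the Hardy parabolic equation with initial data `μ` has no local-in-time
solution. -/
theorem statement5 (N : ℕ) (hN : 1 ≤ N) (p γ : ℝ)
    (hγ0 : 0 < γ) (hγ2 : γ < 2) (hγN : γ < N) (hp : 1 + (2 - γ) / N < p) :
    ∃ Cstar : ℝ, 0 < Cstar ∧
      ∀ μ : EuclideanSpace ℝ (Fin N) → ℝ, Measurable μ → (∀ x, 0 ≤ μ x) →
      (∃ δ : ℝ, 0 < δ ∧ ∀ᵐ x ∂(volume : Measure (EuclideanSpace ℝ (Fin N))),
          x ∈ Metric.ball (0 : EuclideanSpace ℝ (Fin N)) δ →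
          Cstar * ‖x‖ ^ (-(2 - γ) / (p - 1)) ≤ μ x) →
      ∀ T : ℝ, 0 < T →
        ¬∃ u : EuclideanSpace ℝ (Fin N) → ℝ → ℝ, IsSolutionFun N p γ μ T u :=
  statement5_general N hN p γ hγ0 hγ2 hp
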